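/- Let F ∈ F^{M×n}, G ∈ F^{N×n}, and suppose there exists P ∈ F^{n×N} with F·P = 0 and rank(G·P) = N. Then rank([F;G]) = rank(F) + N. -/

import Mathlib

/-!
By rank–nullity, `rank [F; G] = rank F + dim G(ker F)`. Since `F * P = 0`, the column space of
`G * P` lies in `G(ker F) ⊆ 𝔽^N`, and it has dimension `N`; hence `dim G(ker F) = N`.
-/

open Module

theorem Submodule.finrank_map_add_finrank_inf_ker {K V W : Type*} [DivisionRing K]
    [AddCommGroup V] [Module K V] [AddCommGroup W] [Module K W] [FiniteDimensional K V]
    (p : Submodule K V) (g : V →ₗ[K] W) :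
    finrank K (p.map g) + finrank K ↥(p ⊓ LinearMap.ker g) = finrank K p := by
  rw [← LinearMap.range_domRestrict, ← (g.domRestrict p).finrank_range_add_finrank_ker,
    LinearMap.ker_domRestrict, ← Submodule.finrank_map_subtype_eq, Submodule.map_comap_subtype]

namespace Matrix

theorem ker_mulVecLin_fromRows {R m₁ m₂ n : Type*} [CommSemiring R] [Fintype n]
    (A : Matrix m₁ n R) (B : Matrix m₂ n R) :
    LinearMap.ker (fromRows A B).mulVecLin =
      LinearMap.ker A.mulVecLin ⊓ LinearMap.ker B.mulVecLin := by
  ext v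
  simp [fromRows_mulVec, funext_iff, Sum.forall]

theorem rank_fromRows {K m₁ m₂ n : Type*} [Field K] [Fintype n]
    (A : Matrix m₁ n K) (B : Matrix m₂ n K) :
    (fromRows A B).rank = A.rank + finrank K ((LinearMap.ker A.mulVecLin).map B.mulVecLin) := by
  have h₁ := (fromRows A B).mulVecLin.finrank_range_add_finrank_ker
  have h₂ := A.mulVecLin.finrank_range_add_finrank_ker
  have h₃ := (LinearMap.ker A.mulVecLin).finrank_map_add_finrank_inf_ker B.mulVecLin
  rw [ker_mulVecLin_fromRows] at h₁
  rw [rank, rank]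
  omega

theorem range_mulVecLin_mul_le_map_ker {R l m n o : Type*} [CommSemiring R] [Fintype n]
    [Fintype o] (A : Matrix l n R) (B : Matrix m n R) (P : Matrix n o R) (hAP : A * P = 0) :
    LinearMap.range (B * P).mulVecLin ≤ (LinearMap.ker A.mulVecLin).map B.mulVecLin := by
  rintro _ ⟨v, rfl⟩
  refine ⟨P *ᵥ v, ?_, ?_⟩
  · simp [mulVec_mulVec, hAP]
  · simp [mulVec_mulVec]

end Matrix

/-- Converse: existence of `P` with `F * P = 0` and `rank (G * P) = N`
implies the rank-increment condition `rank([F;G]) = rank(F) + N`. -/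
theorem rank_increment_of_encoding_matrix
    {𝔽 : Type*} [Field 𝔽] {M N n : ℕ}
    (F : Matrix (Fin M) (Fin n) 𝔽) (G : Matrix (Fin N) (Fin n) 𝔽)
    (P : Matrix (Fin n) (Fin N) 𝔽)
    (hFP : F * P = 0) (hGP : (G * P).rank = N) :
    (Matrix.fromRows F G).rank = F.rank + N := by
  rw [Matrix.rank_fromRows]
  congr 1
  apply le_antisymm
  · simpa using Submodule.finrank_le ((LinearMap.ker F.mulVecLin).map G.mulVecLin)
  · calc N = (G * P).rank := hGP.symm
      _ ≤ _ := Submodule.finrank_mono (Matrix.range_mulVecLin_mul_le_map_ker F G P hFP)
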